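/- arXiv:2112.08893 — 3 statements merged into one kernel-verified Lean document; each statement's English description precedes it below -/
import Mathlib

section
/- Let n ≥ 1 and, for each l ∈ {1,…,n}, let p_l and q_l be integers with q_l ≥ 1 and gcd(p_l, q_l) = 1, and let q = lcm(q_1,…,q_n). If q ≥ 3, then there exist nonnegative real numbers r_1,…,r_n and an integer j with 1 ≤ j ≤ q−1 such that: (a) for every integer k with 1 ≤ k ≤ q−1, k ≠ j and k ≠ q−j, one has ∑_{l=1}^n r_l cos(2π j p_l/q_l) > ∑_{l=1}^n r_l cos(2π k p_l/q_l); and (b) ∑_{l=1}^n r_l sin(2π j p_l/q_l) ≠ 0. -/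
open Real

/-!
Choose `T` with `d = lcm (q l : l ∈ T)` maximal subject to `3 d ≤ Q`. Maximality forces an index
`m` with `lcm d (q m) = Q`, i.e. the character `k ↦ exp (2πi k p_m / q_m)` is faithful on the
subgroup `K = dℤ/Qℤ`, cyclic of order `Q / d ≥ 3`. Put a large weight `A` on every `l ∈ T` and
weight `1` on `m`. Off `K` some term of `T` loses at least `1 - cos (2π / Q)`, which the weight `A`
makes larger than anything the `m`-term can recover. On `K` all terms of `T` equal `1`, and the
`m`-term is the cosine of a faithful character of a cyclic group of order `≥ 3`: it is strictly
maximal exactly at the two elements `±j` sent to `exp (±2πi d / Q)`, where its sine is nonzero.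
-/

lemma coe_two_pi_mul_intCast_div_congr {N : ℕ} {a b : ℤ} (h : (a : ZMod N) = b) :
    ((2 * π * a / N : ℝ) : Angle) = (2 * π * b / N : ℝ) := by
  obtain ⟨c, hc⟩ := (ZMod.intCast_eq_intCast_iff_dvd_sub a b N).1 h
  rcases eq_or_ne N 0 with rfl | hN
  · simp
  rw [Angle.angle_eq_iff_two_pi_dvd_sub]
  refine ⟨-c, ?_⟩
  have hc' : (a : ℝ) = b - N * c := by
    have : (b : ℝ) - a = N * c := by exact_mod_cast hc
    linarith
  rw [hc']
  push_cast
  field_simp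
  ring

lemma cos_two_pi_mul_intCast_div_congr {N : ℕ} {a b : ℤ} (h : (a : ZMod N) = b) :
    cos (2 * π * a / N) = cos (2 * π * b / N) := by
  rw [← Angle.cos_coe, coe_two_pi_mul_intCast_div_congr h, Angle.cos_coe]

lemma sin_two_pi_mul_intCast_div_congr {N : ℕ} {a b : ℤ} (h : (a : ZMod N) = b) :
    sin (2 * π * a / N) = sin (2 * π * b / N) := by
  rw [← Angle.sin_coe, coe_two_pi_mul_intCast_div_congr h, Angle.sin_coe]

lemma cos_two_pi_mul_intCast_div_eq_natAbs_valMinAbs (N : ℕ) (a : ℤ) :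
    cos (2 * π * a / N) = cos (2 * π * (a : ZMod N).valMinAbs.natAbs / N) := by
  rw [cos_two_pi_mul_intCast_div_congr (ZMod.coe_valMinAbs (a : ZMod N)).symm, ← cos_abs,
    Nat.cast_natAbs, Int.cast_abs]
  congr 1
  rw [abs_div, abs_mul, abs_of_pos two_pi_pos, Nat.abs_cast]

lemma cos_two_pi_mul_div_lt_of_lt {N x y : ℕ} (hxy : x < y) (hy : 2 * y ≤ N) :
    cos (2 * π * y / N) < cos (2 * π * x / N) := by
  have hN : (0 : ℝ) < N := by exact_mod_cast (show 0 < N by omega)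
  have hyN : (2 * y : ℝ) ≤ N := by exact_mod_cast hy
  have hxy' : (x : ℝ) < y := by exact_mod_cast hxy
  refine strictAntiOn_cos ⟨by positivity, ?_⟩ ⟨by positivity, ?_⟩ (by gcongr)
  · rw [div_le_iff₀ hN]; nlinarith [pi_pos]
  · rw [div_le_iff₀ hN]; nlinarith [pi_pos]

lemma cos_two_pi_mul_intCast_div_le {N : ℕ} [NeZero N] {a : ℤ} (ha : (a : ZMod N) ≠ 0) :
    cos (2 * π * a / N) ≤ cos (2 * π / N) := by
  have h1 : 1 ≤ (a : ZMod N).valMinAbs.natAbs := by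
    simpa [Nat.one_le_iff_ne_zero, ZMod.valMinAbs_eq_zero] using ha
  have h2 := ZMod.natAbs_valMinAbs_le (a : ZMod N)
  rw [cos_two_pi_mul_intCast_div_eq_natAbs_valMinAbs]
  rcases h1.eq_or_lt with h | h
  · simp [← h]
  · simpa using (cos_two_pi_mul_div_lt_of_lt h (by omega)).le

lemma cos_two_pi_mul_intCast_div_lt {N : ℕ} [NeZero N] {a : ℤ} (h0 : (a : ZMod N) ≠ 0)
    (h1 : (a : ZMod N) ≠ 1) (h2 : (a : ZMod N) ≠ -1) :
    cos (2 * π * a / N) < cos (2 * π / N) := by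
  have hge : 2 ≤ (a : ZMod N).valMinAbs.natAbs := by
    have hne0 : (a : ZMod N).valMinAbs.natAbs ≠ 0 := by simpa [ZMod.valMinAbs_eq_zero] using h0
    have hne1 : (a : ZMod N).valMinAbs.natAbs ≠ 1 := by
      rw [Ne, Int.natAbs_eq_iff]
      rintro (h | h)
      · exact h1 (by rw [← ZMod.coe_valMinAbs (a : ZMod N), h]; simp)
      · exact h2 (by rw [← ZMod.coe_valMinAbs (a : ZMod N), h]; simp)
    omega
  have hle := ZMod.natAbs_valMinAbs_le (a : ZMod N)
  rw [cos_two_pi_mul_intCast_div_eq_natAbs_valMinAbs]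
  simpa using cos_two_pi_mul_div_lt_of_lt (x := 1) hge (by omega)

lemma two_pi_mul_natCast_mul_intCast_div (k : ℕ) (p : ℤ) (N : ℕ) :
    2 * π * k * p / N = 2 * π * ((k * p : ℤ) : ℝ) / N := by
  push_cast; ring

lemma sin_two_pi_div_ne_zero {N : ℕ} (hN : 3 ≤ N) : sin (2 * π / N) ≠ 0 := by
  have hN' : (3 : ℝ) ≤ N := by exact_mod_cast hN
  refine (sin_pos_of_pos_of_lt_pi (by positivity) ?_).ne'
  rw [div_lt_iff₀ (by positivity)]
  nlinarith [pi_pos]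

theorem exists_cos_two_pi_mul_div_lt {N : ℕ} (hN : 3 ≤ N) {w : ℤ} (hw : IsCoprime w N) :
    ∃ s₀ : ℕ, 1 ≤ s₀ ∧ s₀ < N ∧ sin (2 * π * s₀ * w / N) ≠ 0 ∧
      ∀ s : ℕ, 1 ≤ s → s < N → s ≠ s₀ → s ≠ N - s₀ →
        cos (2 * π * s * w / N) < cos (2 * π * s₀ * w / N) := by
  have : NeZero N := ⟨by omega⟩
  have : Fact (1 < N) := ⟨by omega⟩
  set s₀ := ((w : ZMod N)⁻¹).val
  have hs₀w : ((s₀ * w : ℤ) : ZMod N) = ((1 : ℤ) : ZMod N) := by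
    push_cast; exact ZMod.coe_int_val_inv_mul hw
  have hs₀N : s₀ < N := ZMod.val_lt _
  have hs₀ : s₀ ≠ 0 := by
    rintro h
    simp [h] at hs₀w
  have hs_eq (s : ℕ) (c : ZMod N) (h : ((s * w : ℤ) : ZMod N) = c) :
      (s : ZMod N) = c * s₀ := by
    rw [← h]
    push_cast at hs₀w ⊢
    linear_combination -(s : ZMod N) * hs₀w
  refine ⟨s₀, by omega, hs₀N, ?_, fun s hs1 hsN hss₀ hsN' => ?_⟩
  · rw [two_pi_mul_natCast_mul_intCast_div, sin_two_pi_mul_intCast_div_congr hs₀w]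
    simpa using sin_two_pi_div_ne_zero hN
  rw [two_pi_mul_natCast_mul_intCast_div, two_pi_mul_natCast_mul_intCast_div,
    cos_two_pi_mul_intCast_div_congr hs₀w, Int.cast_one, mul_one]
  refine cos_two_pi_mul_intCast_div_lt (fun h => ?_) (fun h => ?_) (fun h => ?_)
  · have := hs_eq s 0 h
    rw [zero_mul, ZMod.natCast_eq_zero_iff] at this
    exact absurd (Nat.le_of_dvd (by omega) this) (by omega)
  · have := hs_eq s 1 h
    rw [one_mul, ZMod.natCast_eq_natCast_iff', Nat.mod_eq_of_lt hsN,
      Nat.mod_eq_of_lt hs₀N] at this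
    exact hss₀ this
  · have := hs_eq s (-1) h
    rw [neg_one_mul, eq_neg_iff_add_eq_zero, ← Nat.cast_add, ZMod.natCast_eq_zero_iff] at this
    have := Nat.eq_of_dvd_of_lt_two_mul (by omega) this (by omega)
    omega

section Coordinate

variable {p : ℤ} {q : ℕ}

lemma cos_two_pi_mul_mul_div_of_dvd {k : ℕ} (hk : q ∣ k) : cos (2 * π * k * p / q) = 1 := by
  rw [two_pi_mul_natCast_mul_intCast_div, cos_two_pi_mul_intCast_div_congr (b := 0) (by
    push_cast; rw [(ZMod.natCast_eq_zero_iff k q).2 hk, zero_mul])]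
  simp

lemma sin_two_pi_mul_mul_div_of_dvd {k : ℕ} (hk : q ∣ k) : sin (2 * π * k * p / q) = 0 := by
  rw [two_pi_mul_natCast_mul_intCast_div, sin_two_pi_mul_intCast_div_congr (b := 0) (by
    push_cast; rw [(ZMod.natCast_eq_zero_iff k q).2 hk, zero_mul])]
  simp

lemma cos_two_pi_div_le_cos_two_pi_div {M N : ℕ} (hM : 2 ≤ M) (hMN : M ≤ N) :
    cos (2 * π / M) ≤ cos (2 * π / N) := by
  have hM' : (2 : ℝ) ≤ M := by exact_mod_cast hM
  have hMN' : (M : ℝ) ≤ N := by exact_mod_cast hMN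
  refine cos_le_cos_of_nonneg_of_le_pi (by positivity) ?_ (by gcongr)
  rw [div_le_iff₀ (by positivity)]
  nlinarith [pi_pos]

lemma cos_two_pi_mul_mul_div_le (hp : IsCoprime p q) {k M : ℕ} (hk : ¬ q ∣ k) (hqM : q ∣ M)
    (hM : M ≠ 0) : cos (2 * π * k * p / q) ≤ cos (2 * π / M) := by
  have hq : 2 ≤ q := by
    rcases q with _ | _ | q
    · exact absurd (zero_dvd_iff.1 hqM) hM
    · exact absurd (one_dvd k) hk
    · omega
  have : NeZero q := ⟨by omega⟩
  refine (two_pi_mul_natCast_mul_intCast_div k p q ▸ cos_two_pi_mul_intCast_div_le ?_).trans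
    (cos_two_pi_div_le_cos_two_pi_div hq (Nat.le_of_dvd (by omega) hqM))
  intro h
  push_cast at h
  apply hk
  rw [← ZMod.natCast_eq_zero_iff, ← mul_one (k : ZMod q), ← ZMod.coe_int_mul_inv_eq_one hp,
    ← mul_assoc, h, zero_mul]

lemma isCoprime_mul_div_gcd (hp : IsCoprime p q) (hq : 0 < q) (d : ℕ) :
    IsCoprime (p * (d / d.gcd q : ℕ)) (q / d.gcd q : ℕ) := by
  refine IsCoprime.mul_left ?_ ?_
  · exact hp.of_isCoprime_of_dvd_right
      (Int.natCast_dvd_natCast.2 (Nat.div_dvd_of_dvd (Nat.gcd_dvd_right d q)))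
  · exact Nat.isCoprime_iff_coprime.2
      (Nat.coprime_div_gcd_div_gcd (Nat.gcd_pos_of_pos_right d hq))

lemma two_pi_mul_mul_div_gcd (p : ℤ) (hq : 0 < q) (d s : ℕ) :
    2 * π * (d * s : ℕ) * p / q =
      2 * π * s * (p * (d / d.gcd q : ℕ) : ℤ) / (q / d.gcd q : ℕ) := by
  obtain ⟨a, ha⟩ := Nat.gcd_dvd_left d q
  obtain ⟨b, hb⟩ := Nat.gcd_dvd_right d q
  have hg := Nat.gcd_pos_of_pos_right d hq
  set g := d.gcd q
  have hb' : q / g = b := by rw [hb, Nat.mul_div_cancel_left _ hg]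
  rw [hb', ha, Nat.mul_div_cancel_left _ hg]
  have hb0 : (b : ℝ) ≠ 0 := by
    rintro h
    simp_all
  have hq' : (q : ℝ) = g * b := by exact_mod_cast hb
  rw [hq']
  push_cast
  field_simp

end Coordinate

section Weights

variable {ι : Type*} {p : ι → ℤ} {q : ι → ℕ} {T : Finset ι}

lemma sum_cos_of_lcm_dvd {k : ℕ} (hk : T.lcm q ∣ k) :
    ∑ l ∈ T, cos (2 * π * k * p l / q l) = T.card := by
  rw [Finset.card_eq_sum_ones, Nat.cast_sum, Nat.cast_one]
  exact Finset.sum_congr rfl fun l hl =>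
    cos_two_pi_mul_mul_div_of_dvd ((Finset.dvd_lcm hl).trans hk)

lemma sum_sin_of_lcm_dvd {k : ℕ} (hk : T.lcm q ∣ k) :
    ∑ l ∈ T, sin (2 * π * k * p l / q l) = 0 :=
  Finset.sum_eq_zero fun _ hl => sin_two_pi_mul_mul_div_of_dvd ((Finset.dvd_lcm hl).trans hk)

lemma sum_cos_le_of_not_lcm_dvd (hcop : ∀ l, IsCoprime (p l) (q l)) {k M : ℕ}
    (hk : ¬ T.lcm q ∣ k) (hM : T.lcm q ∣ M) (hM0 : M ≠ 0) :
    ∑ l ∈ T, cos (2 * π * k * p l / q l) ≤ T.card - (1 - cos (2 * π / M)) := by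
  obtain ⟨l, hlT, hl⟩ : ∃ l ∈ T, ¬ q l ∣ k := by simpa [Finset.lcm_dvd_iff] using hk
  have hdefect :
      1 - cos (2 * π * k * p l / q l) ≤ ∑ l ∈ T, (1 - cos (2 * π * k * p l / q l)) :=
    Finset.single_le_sum (f := fun i => 1 - cos (2 * π * k * p i / q i))
      (fun _ _ => sub_nonneg.2 (cos_le_one _)) hlT
  have := cos_two_pi_mul_mul_div_le (hcop l) hl ((Finset.dvd_lcm hlT).trans hM) hM0
  rw [Finset.sum_sub_distrib, Finset.sum_const, nsmul_one] at hdefect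
  linarith

lemma sum_ite_mem_add_ite_mul [Fintype ι] [DecidableEq ι] (A : ℝ) (m : ι) (f : ι → ℝ) :
    ∑ l, ((if l ∈ T then A else 0) + if l = m then 1 else 0) * f l =
      A * ∑ l ∈ T, f l + f m := by
  simp [add_mul, ite_mul, Finset.sum_add_distrib, Finset.mul_sum]

theorem exists_weights_of_three_mul_lcm_le [Fintype ι] [DecidableEq ι]
    (hcop : ∀ l, IsCoprime (p l) (q l)) (m : ι) {Q : ℕ} (hQ : lcm (T.lcm q) (q m) = Q)
    (hQ3 : 3 ≤ Q) (hT : 3 * T.lcm q ≤ Q) :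
    ∃ (r : ι → ℝ) (j : ℕ),
      (∀ l, 0 ≤ r l) ∧ 1 ≤ j ∧ j ≤ Q - 1 ∧
      (∀ k : ℕ, 1 ≤ k → k ≤ Q - 1 → k ≠ j → k ≠ Q - j →
        ∑ l, r l * cos (2 * π * k * p l / q l) < ∑ l, r l * cos (2 * π * j * p l / q l)) ∧
      ∑ l, r l * sin (2 * π * j * p l / q l) ≠ 0 := by
  set d := T.lcm q
  have hd : 0 < d := Nat.pos_of_ne_zero fun h => by simp [h] at hQ; omega
  have hqm : 0 < q m := Nat.pos_of_ne_zero fun h => by simp [h] at hQ; omega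
  set N := q m / d.gcd (q m)
  have hQdN : Q = d * N := by
    rw [← hQ, lcm_eq_nat_lcm, Nat.lcm_eq_mul_div, Nat.mul_div_assoc _ (Nat.gcd_dvd_right _ _)]
  have hN3 : 3 ≤ N := le_of_mul_le_mul_left (by rw [mul_comm, ← hQdN]; exact hT) hd
  obtain ⟨s₀, hs₀1, hs₀N, hsin, hmax⟩ :=
    exists_cos_two_pi_mul_div_lt hN3 (isCoprime_mul_div_gcd (hcop m) hqm d)
  have hδ : 0 < 1 - cos (2 * π / Q) := by
    have := cos_two_pi_mul_div_lt_of_lt (N := Q) zero_lt_one (by omega)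
    simp only [Nat.cast_zero, Nat.cast_one, mul_zero, mul_one, zero_div, cos_zero] at this
    linarith
  -- off `K` the `T`-terms lose `A * (1 - cos (2π / Q)) = 3`, more than the `m`-term can vary
  set A := 3 / (1 - cos (2 * π / Q))
  have hA : A * (1 - cos (2 * π / Q)) = 3 := div_mul_cancel₀ _ hδ.ne'
  refine ⟨fun l => (if l ∈ T then A else 0) + if l = m then 1 else 0, d * s₀,
    fun l => by positivity, Nat.mul_pos hd hs₀1, ?_, fun k hk1 hkQ hkj hkQj => ?_, ?_⟩
  · have := Nat.mul_lt_mul_of_pos_left hs₀N hd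
    omega
  · simp only [sum_ite_mem_add_ite_mul]
    rw [sum_cos_of_lcm_dvd (dvd_mul_right d s₀), two_pi_mul_mul_div_gcd _ hqm]
    by_cases hdk : d ∣ k
    · obtain ⟨s, rfl⟩ := hdk
      rw [sum_cos_of_lcm_dvd (dvd_mul_right d s), two_pi_mul_mul_div_gcd _ hqm]
      refine add_lt_add_right (hmax s (Nat.pos_of_ne_zero (by rintro rfl; simp at hk1)) ?_
        (fun h => hkj (by rw [h])) (fun h => hkQj (by rw [h, hQdN, Nat.mul_sub]))) _
      exact Nat.lt_of_mul_lt_mul_left (a := d) (by omega)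
    · have hsumT := sum_cos_le_of_not_lcm_dvd hcop hdk (hQ ▸ dvd_lcm_left d (q m)) (by omega)
      have hAT := mul_le_mul_of_nonneg_left hsumT (by positivity : 0 ≤ A)
      linarith [cos_le_one (2 * π * k * p m / q m),
        neg_one_le_cos (2 * π * s₀ * (p m * (d / d.gcd (q m) : ℕ) : ℤ) / N)]
  · simp only [sum_ite_mem_add_ite_mul]
    rw [sum_sin_of_lcm_dvd (dvd_mul_right d s₀), two_pi_mul_mul_div_gcd _ hqm]
    simpa using hsin

end Weights

lemma two_mul_eq_of_dvd_of_lt_three_mul {x Q : ℕ} (hQ : 0 < Q) (hx : x ∣ Q) (hxQ : x ≠ Q)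
    (h : Q < 3 * x) : 2 * x = Q := by
  obtain ⟨c, rfl⟩ := hx
  have hc : c < 3 := by
    by_contra!
    nlinarith
  interval_cases c <;> omega

theorem exists_three_mul_lcm_le_and_lcm_eq_lcm_univ {ι : Type*} [Fintype ι] [DecidableEq ι]
    (q : ι → ℕ) (hQ : 3 ≤ Finset.univ.lcm q) :
    ∃ (T : Finset ι) (m : ι), 3 * T.lcm q ≤ Finset.univ.lcm q ∧
      lcm (T.lcm q) (q m) = Finset.univ.lcm q := by
  set Q := Finset.univ.lcm q
  obtain ⟨T, hT, hmax⟩ := Finset.exists_max_image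
    ((Finset.univ : Finset (Finset ι)).filter fun T => 3 * T.lcm q ≤ Q) (fun T => T.lcm q)
    ⟨∅, by simpa using hQ⟩
  rw [Finset.mem_filter] at hT
  set d := T.lcm q
  have hdQ : d ∣ Q := Finset.lcm_mono (Finset.subset_univ T)
  have hd : 0 < d := Nat.pos_of_dvd_of_pos hdQ (by omega)
  have hdvd (m : ι) : lcm d (q m) ∣ Q := lcm_dvd hdQ (Finset.dvd_lcm (Finset.mem_univ m))
  have hpos (m : ι) : 0 < lcm d (q m) := Nat.pos_of_dvd_of_pos (hdvd m) (by omega)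
  obtain ⟨m, hm⟩ : ∃ m, lcm d (q m) = Q := by
    by_contra! hne
    have hcases (m : ι) : lcm d (q m) = d ∨ 2 * lcm d (q m) = Q := by
      by_cases h3 : 3 * lcm d (q m) ≤ Q
      · have hle : lcm d (q m) ≤ d := by
          simpa [Finset.lcm_insert, lcm_comm] using
            hmax (insert m T) (by simpa [Finset.lcm_insert, lcm_comm] using h3)
        exact .inl (le_antisymm hle (Nat.le_of_dvd (hpos m) (dvd_lcm_left _ _)))
      · exact .inr (two_mul_eq_of_dvd_of_lt_three_mul (by omega) (hdvd m) (hne m) (by omega))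
    by_cases hhalf : ∃ m₀, 2 * lcm d (q m₀) = Q
    · obtain ⟨m₀, hm₀⟩ := hhalf
      have : Q ∣ lcm d (q m₀) := Finset.lcm_dvd fun m _ =>
        (dvd_lcm_right d (q m)).trans <| by
          rcases hcases m with h | h
          · rw [h]; exact dvd_lcm_left _ _
          · rw [(by omega : lcm d (q m) = lcm d (q m₀))]
      have := Nat.le_of_dvd (hpos m₀) this
      omega
    · push Not at hhalf
      have : Q ∣ d := Finset.lcm_dvd fun m _ =>
        ((hcases m).resolve_right (hhalf m)) ▸ dvd_lcm_right d (q m)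
      have := Nat.le_of_dvd hd this
      omega
  exact ⟨T, m, hT.2, hm⟩

theorem stmt0_general (n : ℕ) (p : Fin n → ℤ) (q : Fin n → ℕ)
    (hcop : ∀ l, Int.gcd (p l) (q l) = 1)
    (Q : ℕ) (hQ : Q = Finset.univ.lcm q) (hQ3 : 3 ≤ Q) :
    ∃ (r : Fin n → ℝ) (j : ℕ),
      (∀ l, 0 ≤ r l) ∧ 1 ≤ j ∧ j ≤ Q - 1 ∧
      (∀ k : ℕ, 1 ≤ k → k ≤ Q - 1 → k ≠ j → k ≠ Q - j →
        ∑ l, r l * Real.cos (2 * π * k * p l / q l) <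
          ∑ l, r l * Real.cos (2 * π * j * p l / q l)) ∧
      ∑ l, r l * Real.sin (2 * π * j * p l / q l) ≠ 0 := by
  subst hQ
  obtain ⟨T, m, hT, hTm⟩ := exists_three_mul_lcm_le_and_lcm_eq_lcm_univ q hQ3
  exact exists_weights_of_three_mul_lcm_le (fun l => Int.isCoprime_iff_gcd_eq_one.2 (hcop l))
    m hTm hQ3 hT

/-- Lemma 6.2 of the paper: given coprime pairs `(p l, q l)` with
`q = lcm (q 1, …, q n) ≥ 3`, there are nonnegative weights `r l` and an index
`1 ≤ j ≤ q - 1` at which the weighted cosine sum is strictly maximal among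
`k ∈ {1,…,q-1} \ {j, q-j}`, with nonvanishing weighted sine sum. -/
theorem stmt0 (n : ℕ) (hn : 1 ≤ n) (p : Fin n → ℤ) (q : Fin n → ℕ)
    (hq : ∀ l, 1 ≤ q l) (hcop : ∀ l, Int.gcd (p l) (q l) = 1)
    (Q : ℕ) (hQ : Q = Finset.univ.lcm q) (hQ3 : 3 ≤ Q) :
    ∃ (r : Fin n → ℝ) (j : ℕ),
      (∀ l, 0 ≤ r l) ∧ 1 ≤ j ∧ j ≤ Q - 1 ∧
      (∀ k : ℕ, 1 ≤ k → k ≤ Q - 1 → k ≠ j → k ≠ Q - j →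
        ∑ l, r l * Real.cos (2 * π * k * p l / q l) <
          ∑ l, r l * Real.cos (2 * π * j * p l / q l)) ∧
      ∑ l, r l * Real.sin (2 * π * j * p l / q l) ≠ 0 :=
  stmt0_general n p q hcop Q hQ hQ3
end

section
/- Let m ≥ 1, let c : {1,…,m} → ℂ, and let τ be an involution of {1,…,m} such that c(τ(k)) is the complex conjugate of c(k) for every k. Assume Re(c(k)) < 0 for all k, and that there exists j such that Im(c(j)) ≠ 0 and Re(c(j)) > Re(c(k)) for every k with k ≠ j and k ≠ τ(j). Then there exists t > 0 such that Re(∑_{k=1}^m exp(t·c(k))) < 0. -/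
open Real Complex

lemma stmt5_aux (m : ℕ) (c : Fin m → ℂ) (τ : Fin m → Fin m)
    (hτ : ∀ k, τ (τ k) = k) (hconj : ∀ k, c (τ k) = (starRingEnd ℂ) (c k))
    (j : Fin m) (hω : 0 < (c j).im)
    (hdom : ∀ k, k ≠ j → k ≠ τ j → (c k).re < (c j).re) :
    ∃ t : ℝ, 0 < t ∧ (∑ k, Complex.exp ((t : ℂ) * c k)).re < 0 := by
  set a := (c j).re with ha
  set ω := (c j).im with hωdef
  have hωne : ω ≠ 0 := ne_of_gt hω
  have hτj : τ j ≠ j := by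
    intro h
    have := hconj j
    rw [h] at this
    have : (c j).im = -(c j).im := by
      conv_lhs => rw [this]
      simp
    have : ω = 0 := by linarith [this]
    exact hωne this
  have hre_τj : (c (τ j)).re = a := by rw [hconj]; simp [ha]
  have him_τj : (c (τ j)).im = -ω := by rw [hconj]; simp [hωdef]
  set S : Finset (Fin m) := Finset.univ \ {j, τ j} with hS
  -- the normalized contribution of the remaining terms tends to 0
  have htend : Filter.Tendsto (fun t : ℝ => ∑ k ∈ S, Real.exp (t * ((c k).re - a)))
      Filter.atTop (nhds 0) := by
    have : (0 : ℝ) = ∑ k ∈ S, (0 : ℝ) := by simp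
    rw [this]
    refine tendsto_finset_sum _ (fun k hk => ?_)
    have hk1 : k ≠ j := by
      intro h; subst h; simp [hS] at hk
    have hk2 : k ≠ τ j := by
      intro h; subst h; simp [hS] at hk
    have hlt : (c k).re - a < 0 := sub_neg.mpr (hdom k hk1 hk2)
    exact Real.tendsto_exp_atBot.comp (Filter.tendsto_id.atTop_mul_const_of_neg hlt)
  obtain ⟨T, hT⟩ := (Filter.eventually_atTop).mp (htend.eventually_lt_const (by norm_num : (0:ℝ) < 2))
  -- choose t of the form (2N+1)π/ω with t ≥ T
  obtain ⟨N, hN⟩ := exists_nat_ge (T * ω / π)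
  set t : ℝ := (2 * (N : ℝ) + 1) * π / ω with htdef
  have hπ := Real.pi_pos
  have htpos : 0 < t := by
    apply div_pos _ hω
    positivity
  have htT : T ≤ t := by
    rw [htdef, le_div_iff₀ hω]
    have h1 : T * ω ≤ N * π := by
      rw [div_le_iff₀ hπ] at hN
      linarith
    nlinarith
  have htω : t * ω = (2 * (N : ℝ) + 1) * π := div_mul_cancel₀ _ hωne
  have hcos : Real.cos (t * ω) = -1 := by
    have : t * ω = π + (N : ℤ) * (2 * π) := by rw [htω]; push_cast; ring
    rw [this, Real.cos_add_int_mul_two_pi, Real.cos_pi]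
  -- real part of each exponential
  have hterm : ∀ k, (Complex.exp ((t : ℂ) * c k)).re
      = Real.exp (t * (c k).re) * Real.cos (t * (c k).im) := by
    intro k
    rw [Complex.exp_re]
    simp [Complex.mul_re, Complex.mul_im]
  refine ⟨t, htpos, ?_⟩
  have hsplit : (∑ k, Complex.exp ((t : ℂ) * c k)).re
      = ∑ k, (Complex.exp ((t : ℂ) * c k)).re := by
    exact Complex.re_sum _ _
  rw [hsplit]
  have hsub : ({j, τ j} : Finset (Fin m)) ⊆ Finset.univ := Finset.subset_univ _
  rw [← Finset.sum_sdiff hsub, ← hS]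
  have hpair : ∑ k ∈ ({j, τ j} : Finset (Fin m)), (Complex.exp ((t : ℂ) * c k)).re
      = -2 * Real.exp (t * a) := by
    rw [Finset.sum_pair (Ne.symm hτj)]
    rw [hterm j, hterm (τ j), hre_τj, him_τj, ← hωdef, ← ha]
    rw [hcos]
    have : Real.cos (t * -ω) = -1 := by
      rw [mul_neg, Real.cos_neg, hcos]
    rw [this]
    ring
  rw [hpair]
  have hbound : ∑ k ∈ S, (Complex.exp ((t : ℂ) * c k)).re
      < 2 * Real.exp (t * a) := by
    have h1 : ∑ k ∈ S, (Complex.exp ((t : ℂ) * c k)).re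
        ≤ ∑ k ∈ S, Real.exp (t * a) * Real.exp (t * ((c k).re - a)) := by
      refine Finset.sum_le_sum (fun k _ => ?_)
      rw [hterm k, ← Real.exp_add]
      have : t * a + t * ((c k).re - a) = t * (c k).re := by ring
      rw [this]
      calc Real.exp (t * (c k).re) * Real.cos (t * (c k).im)
          ≤ Real.exp (t * (c k).re) * 1 := by
            exact mul_le_mul_of_nonneg_left (Real.cos_le_one _) (Real.exp_pos _).le
        _ = Real.exp (t * (c k).re) := mul_one _
    have h2 : ∑ k ∈ S, Real.exp (t * a) * Real.exp (t * ((c k).re - a))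
        = Real.exp (t * a) * ∑ k ∈ S, Real.exp (t * ((c k).re - a)) := by
      rw [Finset.mul_sum]
    have h3 : ∑ k ∈ S, Real.exp (t * ((c k).re - a)) < 2 := hT t htT
    calc ∑ k ∈ S, (Complex.exp ((t : ℂ) * c k)).re
        ≤ Real.exp (t * a) * ∑ k ∈ S, Real.exp (t * ((c k).re - a)) := h1.trans h2.le
      _ < Real.exp (t * a) * 2 := by
          exact mul_lt_mul_of_pos_left h3 (Real.exp_pos _)
      _ = 2 * Real.exp (t * a) := by ring
  linarith

/-- Abstract asymptotic step in the proof of Lemma 6.4: in a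
conjugation-symmetric family of decaying exponentials with a strictly dominant
oscillating pair, some time `t > 0` makes the real part of the sum negative. -/
theorem stmt5 (m : ℕ) (hm : 1 ≤ m) (c : Fin m → ℂ) (τ : Fin m → Fin m)
    (hτ : ∀ k, τ (τ k) = k) (hconj : ∀ k, c (τ k) = (starRingEnd ℂ) (c k))
    (hre : ∀ k, (c k).re < 0)
    (hex : ∃ j : Fin m, (c j).im ≠ 0 ∧
      ∀ k, k ≠ j → k ≠ τ j → (c k).re < (c j).re) :
    ∃ t : ℝ, 0 < t ∧ (∑ k, Complex.exp ((t : ℂ) * c k)).re < 0 := by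
  obtain ⟨j, him, hdom⟩ := hex
  rcases him.lt_or_gt with h | h
  · -- (c j).im < 0 : use τ j instead
    refine stmt5_aux m c τ hτ hconj (τ j) ?_ ?_
    · rw [hconj]; simpa using h
    · intro k hk1 hk2
      rw [hτ j] at hk2
      have : (c (τ j)).re = (c j).re := by rw [hconj]; simp
      rw [this]
      exact hdom k hk2 hk1
  · exact stmt5_aux m c τ hτ hconj j h hdom
end

section
/- Let q_1,…,q_n be positive integers each dividing the positive integer q, let p_1,…,p_n be integers, and let r_1,…,r_n be nonnegative real numbers. Then Re( ∑_{k=0}^{q−1} ∏_{l=1}^n exp(r_l · e^{2πi k p_l/q_l}) ) ≥ q. -/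
/-!
Expand each exponential as a power series. The `m`-th coefficient of the sum over `k` is
`(1 / m!) ∑ₖ (∑ₗ rₗ ωₗᵏ)ᵐ` with `ωₗ = e^{2πi pₗ/qₗ}` a `q`-th root of unity; multiplying out the
`m`-th power turns it into a combination, with nonnegative coefficients `∏ rₗ`, of geometric sums
`∑_{k<q} wᵏ` over `q`-th roots of unity `w`, each of which is `q` or `0`. So every coefficient has
nonnegative real part, and the `m = 0` coefficient alone is `q`.
-/

open Real Complex

open Finset

theorem Complex.re_geom_sum_nonneg_of_pow_eq_one {w : ℂ} {q : ℕ} (hw : w ^ q = 1) :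
    0 ≤ (∑ k ∈ range q, w ^ k).re := by
  by_cases hw1 : w = 1
  · simp [hw1]
  · simp [geom_sum_eq hw1, hw]

theorem Complex.re_sum_pow_sum_nonneg {ι : Type*} [Fintype ι] {q : ℕ} {a : ι → ℝ}
    (ha : ∀ l, 0 ≤ a l) {ω : ι → ℂ} (hω : ∀ l, ω l ^ q = 1) (m : ℕ) :
    0 ≤ (∑ k ∈ range q, (∑ l, (a l : ℂ) * ω l ^ k) ^ m).re := by
  have expand : ∑ k ∈ range q, (∑ l, (a l : ℂ) * ω l ^ k) ^ m
      = ∑ f : Fin m → ι, ((∏ i, a (f i) : ℝ) : ℂ) * ∑ k ∈ range q, (∏ i, ω (f i)) ^ k := by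
    simp_rw [Fintype.sum_pow, mul_sum, prod_mul_distrib, ← prod_pow, ofReal_prod]
    exact sum_comm
  rw [expand, re_sum]
  refine sum_nonneg fun f _ => ?_
  rw [re_ofReal_mul]
  refine mul_nonneg (prod_nonneg fun i _ => ha (f i)) (re_geom_sum_nonneg_of_pow_eq_one ?_)
  simp [← prod_pow, hω]

theorem Complex.card_le_re_sum_exp {κ : Type*} (s : Finset κ) (z : κ → ℂ)
    (h : ∀ m, 0 ≤ (∑ k ∈ s, z k ^ m).re) : (#s : ℝ) ≤ (∑ k ∈ s, exp (z k)).re := by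
  have series : HasSum (fun m : ℕ => (∑ k ∈ s, z k ^ m).re / m.factorial)
      (∑ k ∈ s, exp (z k)).re := by
    have := hasSum_re (hasSum_sum (s := s) fun k _ => NormedSpace.expSeries_div_hasSum_exp (z k))
    simpa [← exp_eq_exp_ℂ, ← sum_div, ← ofReal_natCast, div_ofReal_re] using this
  simpa using le_hasSum series 0 fun m _ => div_nonneg (h m) (by positivity)

theorem Complex.exp_two_pi_I_mul_div_pow_eq_one {m q : ℕ} (p : ℤ) (h : m ∣ q) :
    exp (2 * π * I * p / m) ^ q = 1 := by
  obtain ⟨d, rfl⟩ := h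
  rcases eq_or_ne m 0 with rfl | hm
  · simp
  rw [← exp_nat_mul, ← exp_int_mul_two_pi_mul_I (p * d)]
  congr 1
  push_cast
  field_simp

theorem stmt12_general (n q : ℕ) (ql : Fin n → ℕ)
    (hdvd : ∀ l, ql l ∣ q) (p : Fin n → ℤ) (r : Fin n → ℝ) (hr : ∀ l, 0 ≤ r l) :
    (q : ℝ) ≤ (∑ k ∈ Finset.range q, ∏ l,
        Complex.exp ((r l : ℂ) *
          Complex.exp (2 * (π : ℂ) * Complex.I * (k : ℂ) * (p l : ℂ) / (ql l : ℂ)))).re := by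
  set ω : Fin n → ℂ := fun l => exp (2 * π * I * p l / ql l)
  have hω_pow : ∀ (k : ℕ) l, exp (2 * π * I * k * p l / ql l) = ω l ^ k := fun k l => by
    rw [← Complex.exp_nat_mul]
    ring_nf
  have key := card_le_re_sum_exp (range q) (fun k => ∑ l, (r l : ℂ) * ω l ^ k)
    (re_sum_pow_sum_nonneg hr fun l => exp_two_pi_I_mul_div_pow_eq_one (p l) (hdvd l))
  simpa [Complex.exp_sum, hω_pow] using key

/-- Lower bound from Lemma 6.1: for nonnegative `r l`, the real part of the
exponential character sum is at least `q`. -/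
theorem stmt12 (n q : ℕ) (hq : 0 < q) (ql : Fin n → ℕ) (hql : ∀ l, 0 < ql l)
    (hdvd : ∀ l, ql l ∣ q) (p : Fin n → ℤ) (r : Fin n → ℝ) (hr : ∀ l, 0 ≤ r l) :
    (q : ℝ) ≤ (∑ k ∈ Finset.range q, ∏ l,
        Complex.exp ((r l : ℂ) *
          Complex.exp (2 * (π : ℂ) * Complex.I * (k : ℂ) * (p l : ℂ) / (ql l : ℂ)))).re :=
  stmt12_general n q ql hdvd p r hr
end
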